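/- In g_ω, consider r = a₂ J∧K₁ + b₂ J∧K₂ + c₂ K₁∧K₂ + a₆ (−J∧P₀ + P₁∧K₂ + K₁∧P₂) with real parameters a₂, b₂, c₂, a₆. Then the Schouten bracket [[r,r]] ∈ g_ω⊗g_ω⊗g_ω is an invariant element, i.e. (ad_X⊗id⊗id + id⊗ad_X⊗id + id⊗id⊗ad_X)([[r,r]]) = 0 for all X ∈ g_ω, if and only if a₂² + b₂² − c₂² − 4ω a₆² = 0 (equivalently a₂² + b₂² − c₂² + 4Λ a₆² = 0 with Λ = −ω). In other words, r is a solution of the modified classical Yang–Baxter equation exactly under this constraint. -/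

import Mathlib

/-!
Expanding the Schouten bracket gives `[[r,r]] = κ • J∧K₁∧K₂ + a₆² • Ω` with
`κ = a₂² + b₂² − c₂² − 4ωa₆²` and `Ω = ω J∧K₁∧K₂ + J∧P₁∧P₂ + P₀∧P₁∧K₁ + P₀∧P₂∧K₂`.
The action of `g_ω` on `g_ω ⊗ g_ω ⊗ g_ω` in the statement is Mathlib's Lie module structure
on tensor products, so invariance means lying in the maximal trivial submodule. `Ω` is
invariant (a check on the basis), while `ad P₀` sends `J∧K₁∧K₂` to `−(J∧P₁∧K₂ + J∧K₁∧P₂)`,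
whose `J ⊗ P₁ ⊗ K₂` coordinate is `−1`. Hence `[[r,r]]` is invariant exactly when `κ = 0`.
-/

open TensorProduct

noncomputable def wedge {g : Type*} [AddCommGroup g] [Module ℝ g] (x y : g) :
    TensorProduct ℝ g g := x ⊗ₜ[ℝ] y - y ⊗ₜ[ℝ] x

open LieModule TensorProduct.LieModule

-- `alt3 R x y z` is `x ∧ y ∧ z`.
noncomputable def alt3 (R : Type*) {M : Type*} [CommRing R] [AddCommGroup M] [Module R M]
    (x y z : M) : M ⊗[R] (M ⊗[R] M) :=
  x ⊗ₜ (y ⊗ₜ z) - x ⊗ₜ (z ⊗ₜ y) - y ⊗ₜ (x ⊗ₜ z) + y ⊗ₜ (z ⊗ₜ x) + z ⊗ₜ (x ⊗ₜ y) - z ⊗ₜ (y ⊗ₜ x)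

theorem alt3_add_alt3_ne_zero {ι R M : Type*} [DecidableEq ι] [CommRing R] [Nontrivial R]
    [AddCommGroup M] [Module R M] (b : Module.Basis ι R M) {i j k l m : ι}
    (hij : i ≠ j) (hik : i ≠ k) (hjk : j ≠ k) (hlj : l ≠ j) (hmj : m ≠ j) :
    alt3 R (b i) (b j) (b k) + alt3 R (b i) (b l) (b m) ≠ 0 := by
  intro h
  -- among the twelve pure tensors only `b i ⊗ b j ⊗ b k` has a nonzero `(i, j, k)` coordinate
  have hcoeff := congrArg (fun t => (b.tensorProduct (b.tensorProduct b)).repr t (i, j, k)) h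
  simp [alt3, Module.Basis.tensorProduct_repr_tmul_apply, Finsupp.single_apply, hij, hik, hjk,
    hlj, hmj, hij.symm, hik.symm, hjk.symm] at hcoeff

section LieModule

variable {R L M : Type*} [CommRing R] [LieRing L] [LieAlgebra R L]

theorem map_ad_add_map_ad_add_map_ad_apply (X : L) (t : L ⊗[R] (L ⊗[R] L)) :
    (TensorProduct.map (LieAlgebra.ad R L X : L →ₗ[R] L) (LinearMap.id : L ⊗[R] L →ₗ[R] L ⊗[R] L)
      + TensorProduct.map (LinearMap.id : L →ₗ[R] L)
        (TensorProduct.map (LieAlgebra.ad R L X : L →ₗ[R] L) (LinearMap.id : L →ₗ[R] L))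
      + TensorProduct.map (LinearMap.id : L →ₗ[R] L)
        (TensorProduct.map (LinearMap.id : L →ₗ[R] L) (LieAlgebra.ad R L X : L →ₗ[R] L))) t
      = ⁅X, t⁆ := by
  suffices h : TensorProduct.map (LieAlgebra.ad R L X : L →ₗ[R] L) LinearMap.id
      + TensorProduct.map LinearMap.id
        (TensorProduct.map (LieAlgebra.ad R L X : L →ₗ[R] L) LinearMap.id)
      + TensorProduct.map LinearMap.id
        (TensorProduct.map LinearMap.id (LieAlgebra.ad R L X : L →ₗ[R] L))
      = toEnd R L (L ⊗[R] (L ⊗[R] L)) X from LinearMap.congr_fun h t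
  refine ext_threefold' fun x y z => ?_
  simp [tmul_add, add_assoc]

variable [AddCommGroup M] [Module R M] [LieRingModule L M] [LieModule R L M]

theorem mem_maxTrivSubmodule_of_span_eq_top {ι : Type*} {v : ι → L}
    (hv : Submodule.span R (Set.range v) = ⊤) {m : M} (h : ∀ i, ⁅v i, m⁆ = 0) :
    m ∈ maxTrivSubmodule R L M := by
  rw [mem_maxTrivSubmodule]
  intro x
  exact LinearMap.congr_fun
    (LinearMap.ext_on_range (f := (toEnd R L M : L →ₗ[R] M →ₗ[R] M).flip m) (g := 0) hv h) x

end LieModule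

structure GOmegaRelations {R g : Type*} [CommRing R] [LieRing g] [LieAlgebra R g] (ω : R)
    (J P0 P1 P2 K1 K2 : g) : Prop where
  lie_J_P1 : ⁅J, P1⁆ = P2
  lie_J_P2 : ⁅J, P2⁆ = -P1
  lie_J_K1 : ⁅J, K1⁆ = K2
  lie_J_K2 : ⁅J, K2⁆ = -K1
  lie_J_P0 : ⁅J, P0⁆ = 0
  lie_P1_K1 : ⁅P1, K1⁆ = -P0
  lie_P2_K2 : ⁅P2, K2⁆ = -P0
  lie_P1_K2 : ⁅P1, K2⁆ = 0
  lie_P2_K1 : ⁅P2, K1⁆ = 0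
  lie_P0_K1 : ⁅P0, K1⁆ = -P1
  lie_P0_K2 : ⁅P0, K2⁆ = -P2
  lie_K1_K2 : ⁅K1, K2⁆ = -J
  lie_P0_P1 : ⁅P0, P1⁆ = ω • K1
  lie_P0_P2 : ⁅P0, P2⁆ = ω • K2
  lie_P1_P2 : ⁅P1, P2⁆ = -(ω • J)

noncomputable def invariantCube {R g : Type*} [CommRing R] [AddCommGroup g] [Module R g] (ω : R)
    (J P0 P1 P2 K1 K2 : g) : g ⊗[R] (g ⊗[R] g) :=
  ω • alt3 R J K1 K2 + alt3 R J P1 P2 + alt3 R P0 P1 K1 + alt3 R P0 P2 K2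

namespace GOmegaRelations

variable {R g : Type*} [CommRing R] [LieRing g] [LieAlgebra R g] {ω : R} {J P0 P1 P2 K1 K2 : g}

theorem lie_P1_J (h : GOmegaRelations ω J P0 P1 P2 K1 K2) : ⁅P1, J⁆ = -P2 := by
  rw [← lie_skew, h.lie_J_P1]

theorem lie_P2_J (h : GOmegaRelations ω J P0 P1 P2 K1 K2) : ⁅P2, J⁆ = P1 := by
  rw [← lie_skew, h.lie_J_P2, neg_neg]

theorem lie_K1_J (h : GOmegaRelations ω J P0 P1 P2 K1 K2) : ⁅K1, J⁆ = -K2 := by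
  rw [← lie_skew, h.lie_J_K1]

theorem lie_K2_J (h : GOmegaRelations ω J P0 P1 P2 K1 K2) : ⁅K2, J⁆ = K1 := by
  rw [← lie_skew, h.lie_J_K2, neg_neg]

theorem lie_P0_J (h : GOmegaRelations ω J P0 P1 P2 K1 K2) : ⁅P0, J⁆ = 0 := by
  rw [← lie_skew, h.lie_J_P0, neg_zero]

theorem lie_K1_P1 (h : GOmegaRelations ω J P0 P1 P2 K1 K2) : ⁅K1, P1⁆ = P0 := by
  rw [← lie_skew, h.lie_P1_K1, neg_neg]

theorem lie_K2_P2 (h : GOmegaRelations ω J P0 P1 P2 K1 K2) : ⁅K2, P2⁆ = P0 := by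
  rw [← lie_skew, h.lie_P2_K2, neg_neg]

theorem lie_K2_P1 (h : GOmegaRelations ω J P0 P1 P2 K1 K2) : ⁅K2, P1⁆ = 0 := by
  rw [← lie_skew, h.lie_P1_K2, neg_zero]

theorem lie_K1_P2 (h : GOmegaRelations ω J P0 P1 P2 K1 K2) : ⁅K1, P2⁆ = 0 := by
  rw [← lie_skew, h.lie_P2_K1, neg_zero]

theorem lie_K1_P0 (h : GOmegaRelations ω J P0 P1 P2 K1 K2) : ⁅K1, P0⁆ = P1 := by
  rw [← lie_skew, h.lie_P0_K1, neg_neg]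

theorem lie_K2_P0 (h : GOmegaRelations ω J P0 P1 P2 K1 K2) : ⁅K2, P0⁆ = P2 := by
  rw [← lie_skew, h.lie_P0_K2, neg_neg]

theorem lie_K2_K1 (h : GOmegaRelations ω J P0 P1 P2 K1 K2) : ⁅K2, K1⁆ = J := by
  rw [← lie_skew, h.lie_K1_K2, neg_neg]

theorem lie_P1_P0 (h : GOmegaRelations ω J P0 P1 P2 K1 K2) : ⁅P1, P0⁆ = -(ω • K1) := by
  rw [← lie_skew, h.lie_P0_P1]

theorem lie_P2_P0 (h : GOmegaRelations ω J P0 P1 P2 K1 K2) : ⁅P2, P0⁆ = -(ω • K2) := by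
  rw [← lie_skew, h.lie_P0_P2]

theorem lie_P2_P1 (h : GOmegaRelations ω J P0 P1 P2 K1 K2) : ⁅P2, P1⁆ = ω • J := by
  rw [← lie_skew, h.lie_P1_P2, neg_neg]

theorem invariantCube_mem_maxTrivSubmodule (h : GOmegaRelations ω J P0 P1 P2 K1 K2)
    (hspan : Submodule.span R (Set.range ![J, P0, P1, P2, K1, K2]) = ⊤) :
    invariantCube ω J P0 P1 P2 K1 K2 ∈ maxTrivSubmodule R g (g ⊗[R] (g ⊗[R] g)) := by
  refine mem_maxTrivSubmodule_of_span_eq_top hspan fun i => ?_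
  fin_cases i <;>
  simp only [invariantCube, alt3, Fin.zero_eta, Fin.mk_one, Fin.reduceFinMk, Matrix.cons_val,
    lie_add, lie_sub, lie_smul, lie_tmul_right, lie_self, h.lie_J_P1, h.lie_J_P2, h.lie_J_K1,
    h.lie_J_K2, h.lie_J_P0, h.lie_P1_K1, h.lie_P2_K2, h.lie_P1_K2, h.lie_P2_K1, h.lie_P0_K1,
    h.lie_P0_K2, h.lie_K1_K2, h.lie_P0_P1, h.lie_P0_P2, h.lie_P1_P2, h.lie_P1_J, h.lie_P2_J,
    h.lie_K1_J, h.lie_K2_J, h.lie_P0_J, h.lie_K1_P1, h.lie_K2_P2, h.lie_K2_P1, h.lie_K1_P2,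
    h.lie_K1_P0, h.lie_K2_P0, h.lie_K2_K1, h.lie_P1_P0, h.lie_P2_P0, h.lie_P2_P1, tmul_add,
    tmul_neg, neg_tmul, tmul_zero, zero_tmul, ← smul_tmul', tmul_smul] <;>
  module

theorem alt3_not_mem_maxTrivSubmodule [Nontrivial R] (h : GOmegaRelations ω J P0 P1 P2 K1 K2)
    (hind : LinearIndependent R ![J, P0, P1, P2, K1, K2])
    (hspan : Submodule.span R (Set.range ![J, P0, P1, P2, K1, K2]) = ⊤) :
    alt3 R J K1 K2 ∉ maxTrivSubmodule R g (g ⊗[R] (g ⊗[R] g)) := by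
  have hP0 : ⁅P0, alt3 R J K1 K2⁆ = -(alt3 R J P1 K2 + alt3 R J K1 P2) := by
    simp only [alt3, lie_add, lie_sub, lie_tmul_right, h.lie_P0_J, h.lie_P0_K1, h.lie_P0_K2,
      tmul_add, tmul_neg, neg_tmul, tmul_zero, zero_tmul]
    module
  have hne := alt3_add_alt3_ne_zero (Module.Basis.mk hind hspan.ge) (i := 0) (j := 2) (k := 5)
    (l := 4) (m := 3) (by decide) (by decide) (by decide) (by decide) (by decide)
  simp only [Module.Basis.mk_apply] at hne
  rw [mem_maxTrivSubmodule]
  intro hmem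
  exact hne (neg_eq_zero.mp (hP0 ▸ hmem P0))

end GOmegaRelations

namespace GOmegaRelations

variable {g : Type*} [LieRing g] [LieAlgebra ℝ g] {ω : ℝ} {J P0 P1 P2 K1 K2 : g}

theorem schouten_eq (h : GOmegaRelations ω J P0 P1 P2 K1 K2)
    {S : g ⊗[ℝ] g →ₗ[ℝ] g ⊗[ℝ] g →ₗ[ℝ] g ⊗[ℝ] (g ⊗[ℝ] g)}
    (hS : ∀ u v u' v' : g, S (u ⊗ₜ v) (u' ⊗ₜ v') =
      ⁅u, u'⁆ ⊗ₜ (v ⊗ₜ v') + u ⊗ₜ (⁅v, u'⁆ ⊗ₜ v') + u ⊗ₜ (u' ⊗ₜ ⁅v, v'⁆))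
    {a2 b2 c2 a6 : ℝ} {r : g ⊗[ℝ] g}
    (hr : r = a2 • wedge J K1 + b2 • wedge J K2 + c2 • wedge K1 K2
      + a6 • (-(wedge J P0) + wedge P1 K2 + wedge K1 P2)) :
    S r r = (a2 ^ 2 + b2 ^ 2 - c2 ^ 2 - 4 * ω * a6 ^ 2) • alt3 ℝ J K1 K2
      + a6 ^ 2 • invariantCube ω J P0 P1 P2 K1 K2 := by
  subst hr
  simp only [wedge, invariantCube, alt3, map_add, map_sub, map_neg, map_smul, LinearMap.add_apply,
    LinearMap.sub_apply, LinearMap.neg_apply, LinearMap.smul_apply, hS, lie_self, h.lie_J_P1,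
    h.lie_J_P2, h.lie_J_K1, h.lie_J_K2, h.lie_J_P0, h.lie_P1_K1, h.lie_P2_K2, h.lie_P1_K2,
    h.lie_P2_K1, h.lie_P0_K1, h.lie_P0_K2, h.lie_K1_K2, h.lie_P0_P1, h.lie_P0_P2, h.lie_P1_P2,
    h.lie_P1_J, h.lie_P2_J, h.lie_K1_J, h.lie_K2_J, h.lie_P0_J, h.lie_K1_P1, h.lie_K2_P2,
    h.lie_K2_P1, h.lie_K1_P2, h.lie_K1_P0, h.lie_K2_P0, h.lie_K2_K1, h.lie_P1_P0, h.lie_P2_P0,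
    h.lie_P2_P1, tmul_neg, neg_tmul, tmul_zero, zero_tmul, ← smul_tmul', tmul_smul]
  module

end GOmegaRelations

theorem mCYBE_condition_g_omega
    (ω : ℝ) (g : Type*) [LieRing g] [LieAlgebra ℝ g]
    (J P0 P1 P2 K1 K2 : g)
    (hind : LinearIndependent ℝ ![J, P0, P1, P2, K1, K2])
    (hspan : Submodule.span ℝ (Set.range ![J, P0, P1, P2, K1, K2]) = ⊤)
    (hJP1 : ⁅J, P1⁆ = P2) (hJP2 : ⁅J, P2⁆ = -P1)
    (hJK1 : ⁅J, K1⁆ = K2) (hJK2 : ⁅J, K2⁆ = -K1) (hJP0 : ⁅J, P0⁆ = 0)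
    (hP1K1 : ⁅P1, K1⁆ = -P0) (hP2K2 : ⁅P2, K2⁆ = -P0)
    (hP1K2 : ⁅P1, K2⁆ = 0) (hP2K1 : ⁅P2, K1⁆ = 0)
    (hP0K1 : ⁅P0, K1⁆ = -P1) (hP0K2 : ⁅P0, K2⁆ = -P2)
    (hK1K2 : ⁅K1, K2⁆ = -J)
    (hP0P1 : ⁅P0, P1⁆ = ω • K1) (hP0P2 : ⁅P0, P2⁆ = ω • K2)
    (hP1P2 : ⁅P1, P2⁆ = -(ω • J))
    -- the Schouten bracket, as a bilinear map determined by its values on pure tensors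
    (S : TensorProduct ℝ g g →ₗ[ℝ] TensorProduct ℝ g g →ₗ[ℝ]
      TensorProduct ℝ g (TensorProduct ℝ g g))
    (hS : ∀ u v u' v' : g,
      S (u ⊗ₜ[ℝ] v) (u' ⊗ₜ[ℝ] v') =
        ⁅u, u'⁆ ⊗ₜ[ℝ] (v ⊗ₜ[ℝ] v') + u ⊗ₜ[ℝ] (⁅v, u'⁆ ⊗ₜ[ℝ] v')
          + u ⊗ₜ[ℝ] (u' ⊗ₜ[ℝ] ⁅v, v'⁆))
    (a2 b2 c2 a6 : ℝ)
    (r : TensorProduct ℝ g g)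
    (hr : r = a2 • wedge J K1 + b2 • wedge J K2 + c2 • wedge K1 K2
      + a6 • (-(wedge J P0) + wedge P1 K2 + wedge K1 P2)) :
    ((∀ X : g,
      (TensorProduct.map (LieAlgebra.ad ℝ g X : g →ₗ[ℝ] g)
          (LinearMap.id : TensorProduct ℝ g g →ₗ[ℝ] TensorProduct ℝ g g)
        + TensorProduct.map (LinearMap.id : g →ₗ[ℝ] g)
          (TensorProduct.map (LieAlgebra.ad ℝ g X : g →ₗ[ℝ] g) (LinearMap.id : g →ₗ[ℝ] g))
        + TensorProduct.map (LinearMap.id : g →ₗ[ℝ] g)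
          (TensorProduct.map (LinearMap.id : g →ₗ[ℝ] g) (LieAlgebra.ad ℝ g X : g →ₗ[ℝ] g)))
        (S r r) = 0)
      ↔ a2 ^ 2 + b2 ^ 2 - c2 ^ 2 - 4 * ω * a6 ^ 2 = 0) := by
  have h : GOmegaRelations ω J P0 P1 P2 K1 K2 := ⟨hJP1, hJP2, hJK1, hJK2, hJP0, hP1K1, hP2K2,
    hP1K2, hP2K1, hP0K1, hP0K2, hK1K2, hP0P1, hP0P2, hP1P2⟩
  simp only [map_ad_add_map_ad_add_map_ad_apply]
  rw [← mem_maxTrivSubmodule ℝ, h.schouten_eq hS hr,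
    add_mem_cancel_right (SMulMemClass.smul_mem _ (h.invariantCube_mem_maxTrivSubmodule hspan))]
  refine ⟨fun hmem => ?_, fun hκ => by simp [hκ]⟩
  by_contra hκ
  exact h.alt3_not_mem_maxTrivSubmodule hind hspan
    (inv_smul_smul₀ hκ (alt3 ℝ J K1 K2) ▸ SMulMemClass.smul_mem _ hmem)
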